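/- arXiv:2312.02927 — 5 statements merged into one kernel-verified Lean document; each statement's English description precedes it below -/
import Mathlib

section
/- For any two solutions v_{β_1}, v_{β_2} of the initial value problem β_i = (σ²/2) v'(x) + h x − φ(p − v(x)), v(0) = 0, on [0, ∞) with β_2 > β_1, the comparison v_{β_2}(x) > v_{β_1}(x) holds for all x > 0. -/
open Filter Topology Set

private lemma slope_pos_aux {f : ℝ → ℝ} {c a : ℝ} (hf : HasDerivAt f c a) (hc : 0 < c) :
    ∀ᶠ x in 𝓝[≠] a, 0 < slope f a x := by
  have h := hasDerivAt_iff_tendsto_slope.mp hf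
  exact h.eventually (eventually_gt_nhds hc)

/-- Comparison of IVP solutions: if `v₁, v₂` solve
`(σ²/2) v' x = β_i − h x + φ (p − v x)`, `v 0 = 0` on `[0, ∞)` with `β₁ < β₂`,
where `φ(y) = φ̃(y) + θ_K y` with `φ̃` nonincreasing, then `v₁ x < v₂ x` for all `x > 0`. -/
theorem stmt7 (σ h p : ℝ) (hσ : 0 < σ) (hh : 0 < h) (hp : 0 < p)
    (φ φt : ℝ → ℝ) (L : NNReal) (hφLip : LipschitzWith L φ)
    (θK : ℝ) (hφt : Antitone φt) (hφeq : ∀ y : ℝ, φ y = φt y + θK * y)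
    (β₁ β₂ : ℝ) (hβ : β₁ < β₂)
    (v₁ v₂ v₁' v₂' : ℝ → ℝ)
    (hderiv₁ : ∀ x : ℝ, 0 ≤ x → HasDerivAt v₁ (v₁' x) x)
    (hderiv₂ : ∀ x : ℝ, 0 ≤ x → HasDerivAt v₂ (v₂' x) x)
    (hode₁ : ∀ x : ℝ, 0 ≤ x → σ ^ 2 / 2 * v₁' x = β₁ - h * x + φ (p - v₁ x))
    (hode₂ : ∀ x : ℝ, 0 ≤ x → σ ^ 2 / 2 * v₂' x = β₂ - h * x + φ (p - v₂ x))
    (hinit₁ : v₁ 0 = 0) (hinit₂ : v₂ 0 = 0) :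
    ∀ x : ℝ, 0 < x → v₁ x < v₂ x := by
  intro x₀ hx₀
  by_contra hcon
  push_neg at hcon
  have hσ2 : (0:ℝ) < σ ^ 2 / 2 := by positivity
  set c : ℝ := (β₂ - β₁) / (σ ^ 2 / 2) with hc
  have hcpos : 0 < c := div_pos (by linarith) hσ2
  set w : ℝ → ℝ := fun x => v₂ x - v₁ x with hwdef
  have hw0 : w 0 = 0 := by simp [hwdef, hinit₁, hinit₂]
  -- wherever w vanishes (on [0,∞)), its derivative is c > 0
  have hderivw : ∀ x : ℝ, 0 ≤ x → w x = 0 → HasDerivAt w c x := by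
    intro x hx hwx
    have h1 := hderiv₁ x hx
    have h2 := hderiv₂ x hx
    have heq : v₂ x = v₁ x := by
      have : v₂ x - v₁ x = 0 := hwx
      linarith
    have e1 := hode₁ x hx
    have e2 := hode₂ x hx
    rw [heq] at e2
    have hval : v₂' x - v₁' x = c := by
      rw [hc, eq_div_iff (ne_of_gt hσ2)]
      nlinarith [e1, e2]
    have := h2.sub h1
    rwa [hval] at this
  have hwcont : ∀ x : ℝ, 0 ≤ x → ContinuousAt w x := fun x hx =>
    ((hderiv₂ x hx).sub (hderiv₁ x hx)).continuousAt
  -- w is positive just to the right of 0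
  have hev0 : ∀ᶠ x in 𝓝[>] (0:ℝ), 0 < w x := by
    have hs := (slope_pos_aux (hderivw 0 le_rfl hw0) hcpos).filter_mono
      (nhdsWithin_mono _ (fun x (hx : x ∈ Ioi (0:ℝ)) => ne_of_gt hx))
    filter_upwards [hs, self_mem_nhdsWithin] with x hsx hx
    have hxpos : (0:ℝ) < x := hx
    have : slope w 0 x = (x - 0)⁻¹ * (w x - w 0) := rfl
    rw [this, hw0] at hsx
    simp only [sub_zero] at hsx
    have h3 := mul_pos hxpos hsx
    rwa [← mul_assoc, mul_inv_cancel₀ (ne_of_gt hxpos), one_mul] at h3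
  obtain ⟨ε, hε, hball⟩ := Metric.mem_nhdsWithin_iff.mp hev0
  have hballpos : ∀ x : ℝ, 0 < x → x < ε → 0 < w x := by
    intro x hx1 hx2
    exact hball ⟨by simpa [abs_of_pos hx1] using hx2, hx1⟩
  set δ : ℝ := min (ε / 2) x₀ with hδdef
  have hδpos : 0 < δ := lt_min (by linarith) hx₀
  have hδε : δ < ε := lt_of_le_of_lt (min_le_left _ _) (by linarith)
  have hδx₀ : δ ≤ x₀ := min_le_right _ _
  -- globally continuous extension of w
  set W : ℝ → ℝ := fun x => w (max x 0) with hWdef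
  have hWcont : Continuous W := by
    rw [continuous_iff_continuousAt]
    intro x
    have hmax : Continuous fun y : ℝ => max y 0 := continuous_id.max continuous_const
    exact ContinuousAt.comp (g := w) (hwcont _ (le_max_right x 0)) hmax.continuousAt
  have hWeq : ∀ x : ℝ, 0 ≤ x → W x = w x := by
    intro x hx; simp [hWdef, max_eq_left hx]
  set S : Set ℝ := Icc δ x₀ ∩ {x | W x ≤ 0} with hSdef
  have hScompact : IsCompact S :=
    isCompact_Icc.inter_right (isClosed_le hWcont continuous_const)
  have hSne : S.Nonempty := ⟨x₀, ⟨hδx₀, le_rfl⟩, by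
    rw [Set.mem_setOf_eq, hWeq x₀ hx₀.le]; simp [hwdef]; linarith⟩
  obtain ⟨t, htS⟩ : ∃ t, t ∈ S ∧ t = sInf S := ⟨sInf S, hScompact.sInf_mem hSne, rfl⟩
  obtain ⟨⟨⟨hδt, htx₀⟩, hWt⟩, htinf⟩ := htS
  have htpos : 0 < t := lt_of_lt_of_le hδpos hδt
  have hwt_le : w t ≤ 0 := by
    have h' : W t ≤ 0 := hWt
    rwa [hWeq t htpos.le] at h'
  -- w is positive on (0, t)
  have hwpos : ∀ y : ℝ, 0 < y → y < t → 0 < w y := by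
    intro y hy1 hy2
    rcases lt_or_ge y δ with hyδ | hyδ
    · exact hballpos y hy1 (lt_trans hyδ hδε)
    · by_contra hyw
      push_neg at hyw
      have hyS : y ∈ S := ⟨⟨hyδ, le_of_lt (lt_of_lt_of_le hy2 htx₀)⟩, by
        rw [Set.mem_setOf_eq, hWeq y hy1.le]; exact hyw⟩
      have : t ≤ y := htinf ▸ csInf_le hScompact.bddBelow hyS
      linarith
  -- by continuity from the left, w t ≥ 0, hence w t = 0
  have hwt0 : w t = 0 := by
    have htend : Tendsto w (𝓝[<] t) (𝓝 (w t)) :=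
      ((hwcont t htpos.le).continuousWithinAt).tendsto
    have hevpos : ∀ᶠ y in 𝓝[<] t, 0 ≤ w y := by
      filter_upwards [Ioo_mem_nhdsLT_of_mem ⟨htpos, le_rfl⟩] with y hy
      exact (hwpos y hy.1 hy.2).le
    have : 0 ≤ w t := ge_of_tendsto htend hevpos
    linarith
  -- but then w has positive derivative at t while being positive to the left: contradiction
  have hslope := (slope_pos_aux (hderivw t htpos.le hwt0) hcpos).filter_mono
    (nhdsWithin_mono _ (fun x (hx : x ∈ Iio t) => ne_of_lt hx))
  have hIoo : Ioo 0 t ∈ 𝓝[<] t := Ioo_mem_nhdsLT_of_mem ⟨htpos, le_rfl⟩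
  obtain ⟨y, hys, hy⟩ := (hslope.and (eventually_of_mem hIoo (fun y hy => hy))).exists
  have hslopeval : slope w t y = (y - t)⁻¹ * (w y - w t) := rfl
  rw [hslopeval, hwt0, sub_zero] at hys
  have h1 : 0 < w y := hwpos y hy.1 hy.2
  have h2 : (y - t)⁻¹ < 0 := inv_lt_zero.mpr (by linarith [hy.2])
  linarith [mul_neg_of_neg_of_pos h2 h1]
end

section
/- If a C¹ solution v of β = (σ²/2) v'(x) + h x − φ(p − v(x)) on [0, ∞) has a finite maximizer x_0, then v is strictly decreasing-in-the-weak-sense after x_0: there exist no points x_0 < x_1 < x_2 with v'(x_1) < 0 < v'(x_2) and v(x_1) = v(x_2). Consequently v is either strictly increasing on [0, ∞) or first increasing then decreasing. -/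
open Set Filter Topology

private lemma slope_right' {f : ℝ → ℝ} {d a b : ℝ} (hf : HasDerivAt f d a)
    (hd : d < 0) (hab : a < b) : ∃ y ∈ Set.Ioo a b, f y < f a := by
  rw [hasDerivAt_iff_tendsto_slope] at hf
  have h1 : Tendsto (slope f a) (𝓝[>] a) (𝓝 d) :=
    hf.mono_left (nhdsWithin_mono a fun y hy => ne_of_gt hy)
  have h2 : ∀ᶠ y in 𝓝[>] a, slope f a y < 0 := h1.eventually (eventually_lt_nhds hd)
  have h3 : Set.Ioo a b ∈ 𝓝[>] a := Ioo_mem_nhdsGT_of_mem ⟨le_refl a, hab⟩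
  obtain ⟨y, hy1, hy2⟩ := (h2.and (eventually_of_mem h3 fun y hy => hy)).exists
  refine ⟨y, hy2, ?_⟩
  rw [slope_def_field] at hy1
  rcases div_neg_iff.mp hy1 with ⟨h4, h5⟩ | ⟨h4, h5⟩ <;> linarith [hy2.1]

private lemma slope_left' {f : ℝ → ℝ} {d a b : ℝ} (hf : HasDerivAt f d b)
    (hd : 0 < d) (hab : a < b) : ∃ y ∈ Set.Ioo a b, f y < f b := by
  rw [hasDerivAt_iff_tendsto_slope] at hf
  have h1 : Tendsto (slope f b) (𝓝[<] b) (𝓝 d) :=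
    hf.mono_left (nhdsWithin_mono b fun y hy => ne_of_lt hy)
  have h2 : ∀ᶠ y in 𝓝[<] b, 0 < slope f b y := h1.eventually (eventually_gt_nhds hd)
  have h3 : Set.Ioo a b ∈ 𝓝[<] b := Ioo_mem_nhdsLT_of_mem ⟨hab, le_refl b⟩
  obtain ⟨y, hy1, hy2⟩ := (h2.and (eventually_of_mem h3 fun y hy => hy)).exists
  refine ⟨y, hy2, ?_⟩
  rw [slope_def_field] at hy1
  rcases div_pos_iff.mp hy1 with ⟨h4, h5⟩ | ⟨h4, h5⟩ <;> linarith [hy2.2]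

private lemma deriv_nonpos_right' {f : ℝ → ℝ} {d a c : ℝ} (hf : HasDerivAt f d a)
    (hac : a < c) (hlt : ∀ x ∈ Set.Ioc a c, f x < f a) : d ≤ 0 := by
  rw [hasDerivAt_iff_tendsto_slope] at hf
  have h1 : Tendsto (slope f a) (𝓝[>] a) (𝓝 d) :=
    hf.mono_left (nhdsWithin_mono a fun y hy => ne_of_gt hy)
  refine le_of_tendsto h1 ?_
  filter_upwards [Ioc_mem_nhdsGT_of_mem ⟨le_refl a, hac⟩] with y hy
  rw [slope_def_field]
  exact div_nonpos_of_nonpos_of_nonneg (by linarith [hlt y hy]) (by linarith [hy.1])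

private lemma deriv_nonneg_left' {f : ℝ → ℝ} {d b c : ℝ} (hf : HasDerivAt f d b)
    (hcb : c < b) (hlt : ∀ x ∈ Set.Ico c b, f x < f b) : 0 ≤ d := by
  rw [hasDerivAt_iff_tendsto_slope] at hf
  have h1 : Tendsto (slope f b) (𝓝[<] b) (𝓝 d) :=
    hf.mono_left (nhdsWithin_mono b fun y hy => ne_of_lt hy)
  refine ge_of_tendsto h1 ?_
  filter_upwards [Ico_mem_nhdsLT_of_mem ⟨hcb, le_refl b⟩] with y hy
  rw [slope_def_field]
  exact div_nonneg_iff.mpr (Or.inr ⟨by linarith [hlt y hy], by linarith [hy.2]⟩)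

/-- If a C¹ solution `v` of `β = (σ²/2) v' x + h x − φ(p − v x)` on `[0, ∞)`
has a finite maximizer `x₀`, then there are no points `x₀ < x₁ < x₂` with
`v' x₁ < 0 < v' x₂` and `v x₁ = v x₂`. Consequently `v` is either strictly increasing on
`[0, ∞)` or first increasing then decreasing. -/
theorem stmt10 (σ h p β : ℝ) (hσ : 0 < σ) (hh : 0 < h)
    (φ : ℝ → ℝ) (hφ : Continuous φ)
    (v v' : ℝ → ℝ)
    (hderiv : ∀ x : ℝ, 0 ≤ x → HasDerivAt v (v' x) x)
    (hderiv_cont : ContinuousOn v' (Set.Ici 0))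
    (hode : ∀ x : ℝ, 0 ≤ x → β = σ ^ 2 / 2 * v' x + h * x - φ (p - v x))
    (hinit : v 0 = 0) :
    (∀ x₀ : ℝ, 0 ≤ x₀ → IsMaxOn v (Set.Ici 0) x₀ →
      ¬ ∃ x₁ x₂ : ℝ, x₀ < x₁ ∧ x₁ < x₂ ∧ v' x₁ < 0 ∧ 0 < v' x₂ ∧ v x₁ = v x₂) ∧
    (StrictMonoOn v (Set.Ici 0) ∨
      ∃ x₀ : ℝ, 0 ≤ x₀ ∧ MonotoneOn v (Set.Icc 0 x₀) ∧ AntitoneOn v (Set.Ici x₀)) := by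
  have hσ2 : (0:ℝ) < σ ^ 2 / 2 := by positivity
  -- equal levels force derivative drop
  have lvl : ∀ a b : ℝ, 0 ≤ a → 0 ≤ b → a < b → v a = v b → v' b < v' a := by
    intro a b ha hb hab hv
    have h1 := hode a ha
    have h2 := hode b hb
    rw [hv] at h1
    have h3 : σ ^ 2 / 2 * v' a + h * a = σ ^ 2 / 2 * v' b + h * b := by linarith
    nlinarith
  have hvc : ∀ x : ℝ, 0 ≤ x → ContinuousAt v x := fun x hx => (hderiv x hx).continuousAt
  have cont : ContinuousOn v (Set.Ici 0) := fun x hx => (hvc x hx).continuousWithinAt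
  set w : ℝ → ℝ := fun x => v (max x 0) with hw
  have hwc : Continuous w := by
    rw [continuous_iff_continuousAt]
    intro x
    have hg : ContinuousAt (fun y : ℝ => max y 0) x :=
      (continuous_id.max continuous_const).continuousAt
    exact ContinuousAt.comp (hvc _ (le_max_right x 0)) hg
  have hwv : ∀ x : ℝ, 0 ≤ x → w x = v x := fun x hx => by simp [hw, max_eq_left hx]
  -- KEY: no x₁ < x₂ in [0,∞) with v' x₁ < 0 < v' x₂
  have key : ∀ x₁ x₂ : ℝ, 0 ≤ x₁ → x₁ < x₂ → v' x₁ < 0 → 0 < v' x₂ → False := by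
    intro x₁ x₂ hx₁ h12 hd1 hd2
    have hx₂ : 0 ≤ x₂ := hx₁.trans h12.le
    have contI : ContinuousOn v (Set.Icc x₁ x₂) :=
      fun x hx => (hvc x (hx₁.trans hx.1)).continuousWithinAt
    obtain ⟨c, hc, hcmin⟩ := isCompact_Icc.exists_isMinOn (Set.nonempty_Icc.mpr h12.le) contI
    obtain ⟨y₁, hy₁, hvy₁⟩ := slope_right' (hderiv x₁ hx₁) hd1 h12
    obtain ⟨y₂, hy₂, hvy₂⟩ := slope_left' (hderiv x₂ hx₂) hd2 h12
    have hc1 : v c < v x₁ := lt_of_le_of_lt (hcmin ⟨hy₁.1.le, hy₁.2.le⟩) hvy₁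
    have hc2 : v c < v x₂ := lt_of_le_of_lt (hcmin ⟨hy₂.1.le, hy₂.2.le⟩) hvy₂
    have hm : v c < min (v x₁) (v x₂) := lt_min hc1 hc2
    set L := (v c + min (v x₁) (v x₂)) / 2 with hLdef
    have hLc : v c < L := by simp only [hLdef]; linarith
    have hL1 : L < v x₁ := by
      have := min_le_left (v x₁) (v x₂); simp only [hLdef]; linarith
    have hL2 : L < v x₂ := by
      have := min_le_right (v x₁) (v x₂); simp only [hLdef]; linarith
    have hx1c : x₁ < c := lt_of_le_of_ne hc.1 (by rintro rfl; exact absurd hc1 (lt_irrefl _))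
    have hcx2 : c < x₂ := lt_of_le_of_ne hc.2 (by rintro rfl; exact absurd hc2 (lt_irrefl _))
    have hsub1 : Set.Icc x₁ c ⊆ Set.Ici (0:ℝ) := fun x hx => hx₁.trans hx.1
    have hsub2 : Set.Icc c x₂ ⊆ Set.Ici (0:ℝ) := fun x hx => (hx₁.trans hc.1).trans hx.1
    -- last crossing a on [x₁, c]
    set K₁ := Set.Icc x₁ c ∩ w ⁻¹' {L} with hK₁def
    have hK₁closed : IsClosed K₁ := isClosed_Icc.inter (isClosed_singleton.preimage hwc)
    have hK₁ne : K₁.Nonempty := by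
      obtain ⟨x, hx, hvx⟩ := intermediate_value_Icc' hx1c.le
        (contI.mono (Set.Icc_subset_Icc_right hcx2.le)) ⟨hLc.le, hL1.le⟩
      exact ⟨x, hx, by simp only [Set.mem_preimage, Set.mem_singleton_iff, hwv x (hsub1 hx)]; exact hvx⟩
    have hbdd : BddAbove K₁ := BddAbove.mono Set.inter_subset_left bddAbove_Icc
    set a := sSup K₁ with hadef
    have haK : a ∈ K₁ := hK₁closed.csSup_mem hK₁ne hbdd
    have haIcc : a ∈ Set.Icc x₁ c := haK.1
    have hva : v a = L := by
      have h5 := haK.2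
      simp only [Set.mem_preimage, Set.mem_singleton_iff, hwv a (hsub1 haIcc)] at h5
      exact h5
    have hac : a < c := lt_of_le_of_ne haIcc.2
      (by intro e; rw [e] at hva; rw [hva] at hLc; exact absurd hLc (lt_irrefl _))
    have hlt1 : ∀ x ∈ Set.Ioc a c, v x < v a := by
      intro x hx
      rw [hva]
      by_contra hcon
      push_neg at hcon
      have hxIcc : x ∈ Set.Icc x₁ c := ⟨haIcc.1.trans hx.1.le, hx.2⟩
      obtain ⟨z, hz, hvz⟩ := intermediate_value_Icc' hx.2
        (contI.mono (Set.Icc_subset_Icc hxIcc.1 hc.2)) ⟨hLc.le, hcon⟩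
      have hzIcc : z ∈ Set.Icc x₁ c := ⟨hxIcc.1.trans hz.1, hz.2⟩
      have hzK : z ∈ K₁ := ⟨hzIcc, by
        simp only [Set.mem_preimage, Set.mem_singleton_iff, hwv z (hsub1 hzIcc)]; exact hvz⟩
      have := le_csSup hbdd hzK
      have := hz.1
      have := hx.1
      linarith
    have hda : v' a ≤ 0 := deriv_nonpos_right' (hderiv a (hsub1 haIcc)) hac hlt1
    -- first crossing b on [c, x₂]
    set K₂ := Set.Icc c x₂ ∩ w ⁻¹' {L} with hK₂def
    have hK₂closed : IsClosed K₂ := isClosed_Icc.inter (isClosed_singleton.preimage hwc)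
    have hK₂ne : K₂.Nonempty := by
      obtain ⟨x, hx, hvx⟩ := intermediate_value_Icc hcx2.le
        (contI.mono (Set.Icc_subset_Icc_left hx1c.le)) ⟨hLc.le, hL2.le⟩
      exact ⟨x, hx, by simp only [Set.mem_preimage, Set.mem_singleton_iff, hwv x (hsub2 hx)]; exact hvx⟩
    have hbdd2 : BddBelow K₂ := BddBelow.mono Set.inter_subset_left bddBelow_Icc
    set b := sInf K₂ with hbdef
    have hbK : b ∈ K₂ := hK₂closed.csInf_mem hK₂ne hbdd2
    have hbIcc : b ∈ Set.Icc c x₂ := hbK.1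
    have hvb : v b = L := by
      have h5 := hbK.2
      simp only [Set.mem_preimage, Set.mem_singleton_iff, hwv b (hsub2 hbIcc)] at h5
      exact h5
    have hcb : c < b := lt_of_le_of_ne hbIcc.1
      (by intro e; rw [e, hvb] at hLc; exact absurd hLc (lt_irrefl _))
    have hlt2 : ∀ x ∈ Set.Ico c b, v x < v b := by
      intro x hx
      rw [hvb]
      by_contra hcon
      push_neg at hcon
      rcases eq_or_lt_of_le hx.1 with rfl | hcx
      · exact absurd (hcon.trans_lt hLc) (lt_irrefl _)
      have hxIcc : x ∈ Set.Icc c x₂ := ⟨hx.1, hx.2.le.trans hbIcc.2⟩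
      obtain ⟨z, hz, hvz⟩ := intermediate_value_Icc hx.1
        (contI.mono (Set.Icc_subset_Icc hc.1 hxIcc.2)) ⟨hLc.le, hcon⟩
      have hzIcc : z ∈ Set.Icc c x₂ := ⟨hz.1, hz.2.trans hxIcc.2⟩
      have hzK : z ∈ K₂ := ⟨hzIcc, by
        simp only [Set.mem_preimage, Set.mem_singleton_iff, hwv z (hsub2 hzIcc)]; exact hvz⟩
      have := csInf_le hbdd2 hzK
      have := hz.2
      have := hx.2
      linarith
    have hdb : 0 ≤ v' b := deriv_nonneg_left' (hderiv b (hsub2 hbIcc)) hcb hlt2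
    have hab : a < b := hac.trans hcb
    have := lvl a b (hsub1 haIcc) (hsub2 hbIcc) hab (hva.trans hvb.symm)
    linarith
  constructor
  · rintro x₀ hx₀ hmax ⟨x₁, x₂, h01, h12, hd1, hd2, heq⟩
    have hx₁ : 0 ≤ x₁ := hx₀.trans h01.le
    have := lvl x₁ x₂ hx₁ (hx₁.trans h12.le) h12 heq
    linarith
  · have hderiveq : ∀ x : ℝ, 0 ≤ x → deriv v x = v' x := fun x hx => (hderiv x hx).deriv
    by_cases hcase : ∀ x : ℝ, 0 ≤ x → 0 ≤ v' x
    · left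
      have mono : MonotoneOn v (Set.Ici 0) := by
        apply monotoneOn_of_deriv_nonneg (convex_Ici 0) cont
        · intro x hx
          rw [interior_Ici] at hx
          exact ((hderiv x hx.le).differentiableAt).differentiableWithinAt
        · intro x hx
          rw [interior_Ici] at hx
          rw [hderiveq x hx.le]
          exact hcase x hx.le
      intro x hx y hy hxy
      rcases lt_or_eq_of_le (mono hx hy hxy.le) with hlt | heqv
      · exact hlt
      · exfalso
        have hconst : ∀ t ∈ Set.Icc x y, v t = v x := by
          intro t ht
          have h0t : (0:ℝ) ≤ t := le_trans hx ht.1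
          have h1 := mono hx h0t ht.1
          have h2 := mono h0t hy ht.2
          rw [← heqv] at h2
          exact le_antisymm h2 h1
        have hder0 : ∀ t ∈ Set.Ioo x y, v' t = 0 := by
          intro t ht
          have hev : v =ᶠ[𝓝 t] fun _ => v x := by
            filter_upwards [isOpen_Ioo.mem_nhds ht] with z hz
            exact hconst z ⟨hz.1.le, hz.2.le⟩
          have h0 : HasDerivAt v 0 t := (hasDerivAt_const t (v x)).congr_of_eventuallyEq hev
          exact (hderiv t (le_trans hx ht.1.le)).unique h0
        set t1 := x + (y - x) / 3 with ht1def
        set t2 := x + 2 * (y - x) / 3 with ht2def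
        have ht1 : t1 ∈ Set.Ioo x y := by constructor <;> (simp only [ht1def]; linarith [hxy])
        have ht2 : t2 ∈ Set.Ioo x y := by constructor <;> (simp only [ht2def]; linarith [hxy])
        have e1 := hode t1 (le_trans hx ht1.1.le)
        have e2 := hode t2 (le_trans hx ht2.1.le)
        rw [hder0 t1 ht1, hconst t1 ⟨ht1.1.le, ht1.2.le⟩] at e1
        rw [hder0 t2 ht2, hconst t2 ⟨ht2.1.le, ht2.2.le⟩] at e2
        have ht12 : t1 < t2 := by simp only [ht1def, ht2def]; linarith [hxy]
        nlinarith [mul_pos hh (sub_pos.mpr ht12)]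
    · right
      push_neg at hcase
      obtain ⟨c, hc0, hcneg⟩ := hcase
      set N := {x : ℝ | 0 ≤ x ∧ v' x < 0} with hNdef
      have hNne : N.Nonempty := ⟨c, hc0, hcneg⟩
      have hNbdd : BddBelow N := ⟨0, fun x hx => hx.1⟩
      set x₀ := sInf N with hx₀def
      have hx₀0 : 0 ≤ x₀ := le_csInf hNne fun x hx => hx.1
      refine ⟨x₀, hx₀0, ?_, ?_⟩
      · apply monotoneOn_of_deriv_nonneg (convex_Icc 0 x₀) (cont.mono fun t ht => ht.1)
        · intro t ht
          rw [interior_Icc] at ht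
          exact ((hderiv t ht.1.le).differentiableAt).differentiableWithinAt
        · intro t ht
          rw [interior_Icc] at ht
          rw [hderiveq t ht.1.le]
          by_contra hcon
          push_neg at hcon
          have : t ∈ N := ⟨ht.1.le, hcon⟩
          exact absurd (csInf_le hNbdd this) (not_le.mpr ht.2)
      · apply antitoneOn_of_deriv_nonpos (convex_Ici x₀)
          (cont.mono (Set.Ici_subset_Ici.mpr hx₀0))
        · intro t ht
          rw [interior_Ici] at ht
          exact ((hderiv t (hx₀0.trans (le_of_lt ht))).differentiableAt).differentiableWithinAt
        · intro t ht
          rw [interior_Ici] at ht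
          rw [hderiveq t (hx₀0.trans (le_of_lt ht))]
          obtain ⟨a, haN, hat⟩ := exists_lt_of_csInf_lt hNne ht
          by_contra hcon
          push_neg at hcon
          exact key a t haN.1 hat haN.2 hcon
end

section
/- Let v_β solve the IVP (σ²/2) v'(x) = β − h x + φ(p − v(x)), v(0) = 0, where φ(y) ≥ θ_0 y for all y with θ_0 < 0. Then v_β(x) ≥ (−β/θ_0 − p − hσ²/(2θ_0²)) e^{−2θ_0 x/σ²} + (β/θ_0 + p − hx/θ_0 + hσ²/(2θ_0²)) for all x ≥ 0. In particular, if β > p|θ_0| + hσ²/(2|θ_0|), then v_β(x) → ∞ as x → ∞. -/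
/-!
The left-hand side `g` of the bound solves the linear problem `(σ²/2) g' = β - h x + θ₀ (p - g)`,
`g 0 = 0`. Since `φ(y) ≥ θ₀ y`, the difference `w = v - g` satisfies `w' ≥ c w` with
`c = -2θ₀/σ²` and `w 0 = 0`, so `w e^{-cx}` is nondecreasing and `w ≥ 0`. When
`β > p|θ₀| + hσ²/(2|θ₀|)` the coefficient of the exponential in `g` is nonnegative, so
`g x ≥ -h x / θ₀ → ∞`.
-/

open Real Filter Set

theorem nonneg_of_hasDerivAt_of_mul_le {w w' : ℝ → ℝ} {c : ℝ}
    (hw : ∀ x, 0 ≤ x → HasDerivAt w (w' x) x) (hge : ∀ x, 0 ≤ x → c * w x ≤ w' x)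
    (h0 : 0 ≤ w 0) {x : ℝ} (hx : 0 ≤ x) : 0 ≤ w x := by
  have hderiv : ∀ y, 0 ≤ y → HasDerivAt (fun y => w y * exp (-c * y))
      ((w' y - c * w y) * exp (-c * y)) y := by
    intro y hy
    have hexp : HasDerivAt (fun y => exp (-c * y)) (exp (-c * y) * (-c * 1)) y :=
      ((hasDerivAt_id' y).const_mul (-c)).exp
    exact ((hw y hy).fun_mul hexp).congr_deriv (by ring)
  have hmono : MonotoneOn (fun y => w y * exp (-c * y)) (Ici 0) := by
    refine monotoneOn_of_hasDerivWithinAt_nonneg (convex_Ici 0)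
      (fun y hy => (hderiv y hy).continuousAt.continuousWithinAt)
      (fun y hy => (hderiv y (le_of_lt <| by simpa using hy)).hasDerivWithinAt) fun y hy => ?_
    have hy : 0 ≤ y := le_of_lt <| by simpa using hy
    exact mul_nonneg (sub_nonneg.2 (hge y hy)) (exp_pos _).le
  have := hmono self_mem_Ici (mem_Ici.2 hx) hx
  simp only [mul_zero, exp_zero, mul_one] at this
  exact nonneg_of_mul_nonneg_left (h0.trans this) (exp_pos _)

theorem le_of_linear_comparison_ode {k θ₀ p : ℝ} {q φ u u' v v' : ℝ → ℝ} (hk : 0 < k)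
    (hφ : ∀ y, θ₀ * y ≤ φ y)
    (hu : ∀ x, 0 ≤ x → HasDerivAt u (u' x) x)
    (hu_ode : ∀ x, 0 ≤ x → k * u' x = q x + θ₀ * (p - u x))
    (hv : ∀ x, 0 ≤ x → HasDerivAt v (v' x) x)
    (hv_ode : ∀ x, 0 ≤ x → k * v' x = q x + φ (p - v x))
    (h0 : u 0 ≤ v 0) {x : ℝ} (hx : 0 ≤ x) : u x ≤ v x := by
  have hgrowth : ∀ y, 0 ≤ y → -θ₀ / k * (v y - u y) ≤ v' y - u' y := by
    intro y hy
    rw [div_mul_eq_mul_div, div_le_iff₀ hk]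
    linarith [hφ (p - v y), hu_ode y hy, hv_ode y hy]
  exact sub_nonneg.1 <| nonneg_of_hasDerivAt_of_mul_le (fun y hy => (hv y hy).sub (hu y hy))
    hgrowth (sub_nonneg.2 h0) hx

noncomputable def comparisonSolution (σ h p β θ₀ x : ℝ) : ℝ :=
  (-(β / θ₀) - p - h * σ ^ 2 / (2 * θ₀ ^ 2)) * exp (-(2 * θ₀ * x) / σ ^ 2)
    + (β / θ₀ + p - h * x / θ₀ + h * σ ^ 2 / (2 * θ₀ ^ 2))

section comparisonSolution

variable {σ h p β θ₀ : ℝ}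

theorem comparisonSolution_zero : comparisonSolution σ h p β θ₀ 0 = 0 := by
  simp only [comparisonSolution, mul_zero, zero_div, neg_zero, exp_zero]
  ring

theorem hasDerivAt_comparisonSolution (hσ : σ ≠ 0) (hθ₀ : θ₀ ≠ 0) (x : ℝ) :
    HasDerivAt (comparisonSolution σ h p β θ₀)
      ((β - h * x + θ₀ * (p - comparisonSolution σ h p β θ₀ x)) / (σ ^ 2 / 2)) x := by
  have hexp : HasDerivAt (fun x => exp (-(2 * θ₀ * x) / σ ^ 2))
      (exp (-(2 * θ₀ * x) / σ ^ 2) * (-(2 * θ₀ * 1) / σ ^ 2)) x :=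
    (((hasDerivAt_id' x).const_mul (2 * θ₀)).neg.div_const (σ ^ 2)).exp
  have hlin : HasDerivAt (fun x => h * x / θ₀) (h * 1 / θ₀) x :=
    ((hasDerivAt_id' x).const_mul h).div_const θ₀
  refine ((hexp.const_mul _).add ((hlin.const_sub _).add_const _)).congr_deriv ?_
  simp only [comparisonSolution]
  field_simp
  ring

theorem comparisonSolution_coeff_nonneg (hθ₀ : θ₀ < 0)
    (hβ : p * |θ₀| + h * σ ^ 2 / (2 * |θ₀|) ≤ β) :
    0 ≤ -(β / θ₀) - p - h * σ ^ 2 / (2 * θ₀ ^ 2) := by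
  rw [abs_of_neg hθ₀] at hβ
  have : θ₀ ≠ 0 := hθ₀.ne
  have hcoeff : -(β / θ₀) - p - h * σ ^ 2 / (2 * θ₀ ^ 2)
      = (β - (p * -θ₀ + h * σ ^ 2 / (2 * -θ₀))) / -θ₀ := by
    field_simp
    ring
  rw [hcoeff]
  exact div_nonneg (sub_nonneg.2 hβ) (neg_nonneg.2 hθ₀.le)

theorem neg_div_mul_le_comparisonSolution (hθ₀ : θ₀ < 0)
    (hβ : p * |θ₀| + h * σ ^ 2 / (2 * |θ₀|) ≤ β) {x : ℝ} (hx : 0 ≤ x) :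
    -(h / θ₀) * x ≤ comparisonSolution σ h p β θ₀ x := by
  have hexp : 1 ≤ exp (-(2 * θ₀ * x) / σ ^ 2) :=
    one_le_exp (div_nonneg (by nlinarith) (sq_nonneg σ))
  have := le_mul_of_one_le_right (comparisonSolution_coeff_nonneg hθ₀ hβ) hexp
  simp only [comparisonSolution]
  linarith [show -(h / θ₀) * x = -(h * x / θ₀) by ring]

theorem tendsto_comparisonSolution_atTop (hh : 0 < h) (hθ₀ : θ₀ < 0)
    (hβ : p * |θ₀| + h * σ ^ 2 / (2 * |θ₀|) ≤ β) :
    Tendsto (comparisonSolution σ h p β θ₀) atTop atTop :=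
  tendsto_atTop_mono' _ ((eventually_ge_atTop 0).mono fun _ hx =>
      neg_div_mul_le_comparisonSolution hθ₀ hβ hx)
    (tendsto_id.const_mul_atTop (neg_pos.2 (div_neg_of_pos_of_neg hh hθ₀)))

end comparisonSolution

theorem stmt12_general (σ h p β θ₀ : ℝ) (hσ : 0 < σ) (hh : 0 < h) (hθ₀ : θ₀ < 0)
    (φ : ℝ → ℝ) (hφlb : ∀ y : ℝ, θ₀ * y ≤ φ y)
    (v v' : ℝ → ℝ)
    (hderiv : ∀ x : ℝ, 0 ≤ x → HasDerivAt v (v' x) x)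
    (hode : ∀ x : ℝ, 0 ≤ x → σ ^ 2 / 2 * v' x = β - h * x + φ (p - v x))
    (hinit : v 0 = 0) :
    (∀ x : ℝ, 0 ≤ x →
      (-(β / θ₀) - p - h * σ ^ 2 / (2 * θ₀ ^ 2)) * Real.exp (-(2 * θ₀ * x) / σ ^ 2)
        + (β / θ₀ + p - h * x / θ₀ + h * σ ^ 2 / (2 * θ₀ ^ 2)) ≤ v x) ∧
    (β > p * |θ₀| + h * σ ^ 2 / (2 * |θ₀|) →
      Filter.Tendsto v Filter.atTop Filter.atTop) := by
  have hk : (0 : ℝ) < σ ^ 2 / 2 := by positivity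
  have hlower : ∀ x, 0 ≤ x → comparisonSolution σ h p β θ₀ x ≤ v x := fun x hx =>
    le_of_linear_comparison_ode hk hφlb
      (fun y _ => hasDerivAt_comparisonSolution hσ.ne' hθ₀.ne y)
      (fun y _ => mul_div_cancel₀ _ hk.ne') hderiv hode
      (by rw [comparisonSolution_zero, hinit]) hx
  exact ⟨hlower, fun hβ => tendsto_atTop_mono' _ ((eventually_ge_atTop 0).mono hlower)
    (tendsto_comparisonSolution_atTop hh hθ₀ hβ.le)⟩

/-- If `v_β` solves the IVP `(σ²/2) v' x = β − h x + φ(p − v x)`, `v 0 = 0`,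
with `φ(y) ≥ θ₀ y` and `θ₀ < 0`, then
`v_β x ≥ (−β/θ₀ − p − hσ²/(2θ₀²)) e^{−2θ₀x/σ²} + (β/θ₀ + p − hx/θ₀ + hσ²/(2θ₀²))` for `x ≥ 0`;
in particular if `β > p|θ₀| + hσ²/(2|θ₀|)` then `v_β x → ∞`. -/
theorem stmt12 (σ h p β θ₀ : ℝ) (hσ : 0 < σ) (hh : 0 < h) (hp : 0 < p) (hθ₀ : θ₀ < 0)
    (φ : ℝ → ℝ) (hφ : Continuous φ) (hφlb : ∀ y : ℝ, θ₀ * y ≤ φ y)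
    (v v' : ℝ → ℝ)
    (hderiv : ∀ x : ℝ, 0 ≤ x → HasDerivAt v (v' x) x)
    (hode : ∀ x : ℝ, 0 ≤ x → σ ^ 2 / 2 * v' x = β - h * x + φ (p - v x))
    (hinit : v 0 = 0) :
    (∀ x : ℝ, 0 ≤ x →
      (-(β / θ₀) - p - h * σ ^ 2 / (2 * θ₀ ^ 2)) * Real.exp (-(2 * θ₀ * x) / σ ^ 2)
        + (β / θ₀ + p - h * x / θ₀ + h * σ ^ 2 / (2 * θ₀ ^ 2)) ≤ v x) ∧
    (β > p * |θ₀| + h * σ ^ 2 / (2 * |θ₀|) →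
      Filter.Tendsto v Filter.atTop Filter.atTop) :=
  stmt12_general σ h p β θ₀ hσ hh hθ₀ φ hφlb v v' hderiv hode hinit
end

section
/- If β > p|θ_0| + hσ²/(2|θ_0|), then the solution v_β of the IVP (σ²/2) v'(x) = β − h x + φ(p − v(x)), v(0) = 0, with φ(y) ≥ θ_0 y and θ_0 < 0, is strictly increasing on [0, ∞): v_β'(x) > 0 for all x ≥ 0. -/
/-! Put `q x = β − h x + θ₀ (p − v x)`, so that `(σ²/2) v' ≥ q` by `φ(y) ≥ θ₀ y`, and
`λ = −2θ₀/σ² > 0`. Differentiating, `q' = −h − θ₀ v' ≥ −h + λ q`, so `r = q − c` with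
`c = h/λ = hσ²/(2|θ₀|)` satisfies `r' ≥ λ r`. The hypothesis on `β` says exactly `r 0 > 0`,
hence `r x ≥ r 0 · e^{λx} > 0` by Grönwall, and `(σ²/2) v' x ≥ q x > c > 0`. -/

open Real Set

theorem mul_exp_le_of_mul_le_deriv {f f' : ℝ → ℝ} {a K : ℝ}
    (hf : ∀ x, a ≤ x → HasDerivAt f (f' x) x) (hK : ∀ x, a ≤ x → K * f x ≤ f' x)
    {x : ℝ} (hx : a ≤ x) : f a * exp (K * (x - a)) ≤ f x := by
  set g : ℝ → ℝ := fun y => exp (-K * (y - a)) * f y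
  have hg : ∀ y, a ≤ y → HasDerivAt g (exp (-K * (y - a)) * (f' y - K * f y)) y := by
    intro y hy
    have hexp : HasDerivAt (fun y => exp (-K * (y - a))) (exp (-K * (y - a)) * -K) y := by
      simpa using (((hasDerivAt_id y).sub_const a).const_mul (-K)).exp
    exact (hexp.mul (hf y hy)).congr_deriv (by ring)
  have hmono : MonotoneOn g (Ici a) := by
    refine monotoneOn_of_hasDerivWithinAt_nonneg (convex_Ici a)
      (f' := fun y => exp (-K * (y - a)) * (f' y - K * f y))
      (fun y hy => (hg y hy).continuousAt.continuousWithinAt) (fun y hy => ?_) (fun y hy => ?_)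
    · rw [interior_Ici] at hy
      exact (hg y (le_of_lt hy)).hasDerivWithinAt
    · rw [interior_Ici] at hy
      exact mul_nonneg (exp_pos _).le (sub_nonneg.2 (hK y (le_of_lt hy)))
  have hga : f a ≤ exp (-K * (x - a)) * f x := by
    simpa [g] using hmono self_mem_Ici hx hx
  calc f a * exp (K * (x - a))
      ≤ exp (-K * (x - a)) * f x * exp (K * (x - a)) :=
        mul_le_mul_of_nonneg_right hga (exp_pos _).le
    _ = f x := by rw [mul_comm, ← mul_assoc, ← exp_add]; simp

theorem stmt13_general (σ h p β θ₀ : ℝ) (hσ : 0 < σ) (hh : 0 < h) (hθ₀ : θ₀ < 0)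
    (hβ : β > p * |θ₀| + h * σ ^ 2 / (2 * |θ₀|))
    (φ : ℝ → ℝ) (hφlb : ∀ y : ℝ, θ₀ * y ≤ φ y)
    (v v' : ℝ → ℝ)
    (hderiv : ∀ x : ℝ, 0 ≤ x → HasDerivAt v (v' x) x)
    (hode : ∀ x : ℝ, 0 ≤ x → σ ^ 2 / 2 * v' x = β - h * x + φ (p - v x))
    (hinit : v 0 = 0) :
    ∀ x : ℝ, 0 ≤ x → 0 < v' x := by
  rw [abs_of_neg hθ₀] at hβ
  set c := h * σ ^ 2 / (2 * -θ₀)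
  set r : ℝ → ℝ := fun x => β - h * x + θ₀ * (p - v x) - c
  have hc : 0 < c := div_pos (by positivity) (by linarith)
  have hσ2 : 0 < σ ^ 2 := by positivity
  have hr_le : ∀ x, 0 ≤ x → r x + c ≤ σ ^ 2 / 2 * v' x := fun x hx => by
    simpa [r, hode x hx] using hφlb (p - v x)
  have hr_deriv : ∀ x, 0 ≤ x → HasDerivAt r (-h - θ₀ * v' x) x := fun x hx => by
    have := ((((hasDerivAt_id x).const_mul h).const_sub β).add
      (((hderiv x hx).const_sub p).const_mul θ₀)).sub_const c
    exact this.congr_deriv (by ring)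
  have hr_growth : ∀ x, 0 ≤ x → -2 * θ₀ / σ ^ 2 * r x ≤ -h - θ₀ * v' x := fun x hx => by
    have hv' : 2 / σ ^ 2 * (r x + c) ≤ v' x := by
      rw [div_mul_eq_mul_div, div_le_iff₀ hσ2]; linarith [hr_le x hx]
    have hcσ : 2 / σ ^ 2 * c * -θ₀ = h := by
      simp only [c]; field_simp [hθ₀.ne]
    have hθv' := mul_le_mul_of_nonneg_left hv' (by linarith : 0 ≤ -θ₀)
    have hsplit : -2 * θ₀ / σ ^ 2 * r x = -θ₀ * (2 / σ ^ 2 * (r x + c)) - h := by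
      rw [← hcσ]; ring
    linarith
  have hr0 : 0 < r 0 := by simp only [r, hinit]; linarith
  intro x hx
  have hrx : 0 < r x := lt_of_lt_of_le (by positivity)
    (mul_exp_le_of_mul_le_deriv (a := 0) hr_deriv hr_growth hx)
  have hv'x : 0 < σ ^ 2 / 2 * v' x := by linarith [hr_le x hx]
  exact pos_of_mul_pos_right hv'x (by positivity)

/-- If `β > p|θ₀| + hσ²/(2|θ₀|)`, then the solution `v` of the IVP
`(σ²/2) v' x = β − h x + φ(p − v x)`, `v 0 = 0`, with `φ(y) ≥ θ₀ y` and `θ₀ < 0`,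
is strictly increasing: `v' x > 0` for all `x ≥ 0`. -/
theorem stmt13 (σ h p β θ₀ : ℝ) (hσ : 0 < σ) (hh : 0 < h) (hp : 0 < p) (hθ₀ : θ₀ < 0)
    (hβ : β > p * |θ₀| + h * σ ^ 2 / (2 * |θ₀|))
    (φ : ℝ → ℝ) (hφ : Continuous φ) (hφlb : ∀ y : ℝ, θ₀ * y ≤ φ y)
    (v v' : ℝ → ℝ)
    (hderiv : ∀ x : ℝ, 0 ≤ x → HasDerivAt v (v' x) x)
    (hode : ∀ x : ℝ, 0 ≤ x → σ ^ 2 / 2 * v' x = β - h * x + φ (p - v x))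
    (hinit : v 0 = 0) :
    ∀ x : ℝ, 0 ≤ x → 0 < v' x :=
  stmt13_general σ h p β θ₀ hσ hh hθ₀ hβ φ hφlb v v' hderiv hode hinit
end

section
/- β* = inf I belongs to I: the solution v_{β*} increases strictly to infinity. (Proof by contradiction using that β ↦ v_β(x) is continuous and increasing for each fixed x.) -/
/-- `β* = inf I` belongs to `I`: the solution `v_{β*}` increases strictly to
infinity. Hypotheses: (a) for each fixed `x ≥ 0`, `β ↦ v_β x` is continuous and (strictly)
monotone increasing on `(β̲, ∞)`; (b) every `β > β̲` lies in exactly one of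
`I = {β : v_β strictly increases to ∞}` or `N = {β : v_β first increasing, then decreasing}`;
(c) `I` is nonempty and upward closed, and `N` is nonempty; `β* = sInf I > β̲`. -/
theorem stmt15 (βlow : ℝ) (v : ℝ → ℝ → ℝ)
    (I N : Set ℝ)
    (hI : I = {β : ℝ | βlow < β ∧ StrictMonoOn (v β) (Set.Ici 0) ∧
      Filter.Tendsto (v β) Filter.atTop Filter.atTop})
    (hN : N = {β : ℝ | βlow < β ∧ ∃ x₀ : ℝ, 0 ≤ x₀ ∧ MonotoneOn (v β) (Set.Icc 0 x₀) ∧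
      StrictAntiOn (v β) (Set.Ici x₀)})
    (hcont : ∀ x : ℝ, 0 ≤ x → ContinuousOn (fun β => v β x) (Set.Ioi βlow))
    (hmono : ∀ x : ℝ, 0 < x → StrictMonoOn (fun β => v β x) (Set.Ioi βlow))
    (hdich : ∀ β : ℝ, βlow < β → (β ∈ I ∨ β ∈ N) ∧ ¬ (β ∈ I ∧ β ∈ N))
    (hInonempty : I.Nonempty)
    (hIup : ∀ β₁ β₂ : ℝ, β₁ ∈ I → β₁ < β₂ → β₂ ∈ I)
    (hNnonempty : N.Nonempty)
    (βstar : ℝ) (hβstar : βstar = sInf I) (hβstar_low : βlow < βstar) :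
    βstar ∈ I := by
  rcases (hdich βstar hβstar_low).1 with h | hNmem
  · exact h
  · exfalso
    rw [hN] at hNmem
    obtain ⟨-, x₀, hx₀, -, hanti⟩ := hNmem
    have hIβ : ∀ β, βstar < β → β ∈ I := by
      intro β hβ
      rw [hβstar] at hβ
      obtain ⟨β', hβ'I, hβ'lt⟩ := exists_lt_of_csInf_lt hInonempty hβ
      exact hIup β' β hβ'I hβ'lt
    set f : ℝ → ℝ := fun β => v β (x₀ + 1) - v β x₀ with hf
    have hx0mem : x₀ ∈ Set.Ici (0:ℝ) := hx₀
    have h1mem : x₀ + 1 ∈ Set.Ici (0:ℝ) := by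
      simp only [Set.mem_Ici]; linarith
    have hnonneg : ∀ β ∈ Set.Ioi βstar, 0 ≤ f β := by
      intro β hβ
      have hmem := hIβ β hβ
      rw [hI] at hmem
      obtain ⟨hb, hsm, -⟩ := hmem
      have := hsm hx0mem h1mem (by linarith)
      simp only [hf]
      linarith
    have hct : Filter.Tendsto f (nhdsWithin βstar (Set.Ioi βstar)) (nhds (f βstar)) := by
      have h1 := (hcont (x₀ + 1) (by linarith)).continuousWithinAt
        (Set.mem_Ioi.mpr hβstar_low)
      have h2 := (hcont x₀ hx₀).continuousWithinAt (Set.mem_Ioi.mpr hβstar_low)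
      exact (h1.sub h2).mono_left (nhdsWithin_mono _ (Set.Ioi_subset_Ioi hβstar_low.le))
    have hkey : 0 ≤ f βstar :=
      ge_of_tendsto hct (eventually_nhdsWithin_of_forall hnonneg)
    have hlt : v βstar (x₀ + 1) < v βstar x₀ :=
      hanti (Set.self_mem_Ici) (by simp only [Set.mem_Ici]; linarith) (by linarith)
    simp only [hf] at hkey
    linarith
end
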